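/- arXiv:2310.13519 — 5 statements merged into one kernel-verified Lean document; each statement's English description precedes it below -/
import Mathlib

section
/- Let P be the 3×3 real matrix with rows (1, −1/2, 0), (−1/2, 1, 0), (0, 0, 3), and let R be the 3×3 real matrix with rows (√3/2, 0, 0), (−1/2, 1, 0), (0, 0, √3). Then P = RᵀR, R is invertible, and consequently P is positive definite. -/
/-! Since `xᵀ (RᵀR) x = ‖R x‖²` and `R x ≠ 0` for `x ≠ 0` when `R` is invertible, a Gram matrix
`RᵀR` of an invertible `R` is positive definite; `R` is lower triangular with determinant `3/2`. -/

open Matrix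

lemma vonMises_matrix_eq_transpose_mul_self :
    !![(1 : ℝ), -1/2, 0; -1/2, 1, 0; 0, 0, 3] =
      (!![Real.sqrt 3 / 2, 0, 0; -1/2, 1, 0; 0, 0, Real.sqrt 3])ᵀ *
        !![Real.sqrt 3 / 2, 0, 0; -1/2, 1, 0; 0, 0, Real.sqrt 3] := by
  ext i j
  fin_cases i <;> fin_cases j <;>
    norm_num [mul_apply, Fin.sum_univ_three, div_mul_div_comm, cons_val_two]

lemma det_vonMises_factor :
    (!![Real.sqrt 3 / 2, 0, 0; -1/2, 1, 0; 0, 0, Real.sqrt 3]).det = 3 / 2 := by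
  simp [det_fin_three, div_mul_eq_mul_div]

lemma Matrix.PosDef.transpose_mul_self_of_isUnit {n K : Type*} [Fintype n] [DecidableEq n]
    [Field K] [PartialOrder K] [StarRing K] [TrivialStar K] [StarOrderedRing K]
    {A : Matrix n n K} (hA : IsUnit A) : (Aᵀ * A).PosDef := by
  simpa only [conjTranspose_eq_transpose_of_trivial] using
    PosDef.conjTranspose_mul_self A (mulVec_injective_iff_isUnit.2 hA)

/-- The matrix `P` of the von Mises / approximate Ilyushin criteria factors as
`P = RᵀR` with `R` invertible, hence `P` is positive definite. -/
theorem vonMises_P_factorization_posDef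
    (P R : Matrix (Fin 3) (Fin 3) ℝ)
    (hP : P = !![1, -1/2, 0; -1/2, 1, 0; 0, 0, 3])
    (hR : R = !![Real.sqrt 3 / 2, 0, 0; -1/2, 1, 0; 0, 0, Real.sqrt 3]) :
    P = Rᵀ * R ∧ IsUnit R ∧ P.PosDef := by
  have hfactor : P = Rᵀ * R := hP.trans (hR ▸ vonMises_matrix_eq_transpose_mul_self)
  have hunit : IsUnit R := by
    rw [isUnit_iff_isUnit_det, hR, det_vonMises_factor]
    norm_num
  exact ⟨hfactor, hunit, hfactor ▸ PosDef.transpose_mul_self_of_isUnit hunit⟩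
end

section
/- Let σ₀ > 0. For every (ė₁, ė₂) ∈ ℝ², the supremum of σ₁ė₁ + σ₂ė₂ over the set {(σ₁, σ₂) ∈ ℝ² : max(|σ₂ − σ₁|, |σ₁|, |σ₂|) ≤ σ₀} equals σ₀·max(|ė₁|, |ė₂|, |ė₁ + ė₂|), and the supremum is attained. -/
/-!
The Tresca hexagon `|σ₁|, |σ₂|, |σ₂ - σ₁| ≤ σ₀` has the six vertices `±σ₀(1,0)`, `±σ₀(0,1)`,
`±σ₀(1,1)`, at which `σ₁ė₁ + σ₂ė₂` takes the values `±σ₀ė₁`, `±σ₀ė₂`, `±σ₀(ė₁ + ė₂)`; so the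
supremum is attained at a vertex. For the upper bound, write `σ ⬝ ė` in the three forms
`σ₁ė₁ + σ₂ė₂ = σ₁(ė₁ + ė₂) + (σ₂ - σ₁)ė₂ = σ₂(ė₁ + ė₂) + (σ₁ - σ₂)ė₁`, each bounded by `σ₀`
times a sum of two of `|ė₁|, |ė₂|, |ė₁ + ė₂|`; since `ė₁`, `ė₂` and `-(ė₁ + ė₂)` sum to zero, the
smallest such sum is the largest of the three absolute values.
-/

section LinearOrderedRing

variable {R : Type*} [CommRing R] [LinearOrder R] [IsStrictOrderedRing R]

theorem min_abs_add_abs_eq_max_abs (x y : R) :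
    min (|x| + |y|) (min (|x + y| + |x|) (|x + y| + |y|)) = max (max |x| |y|) |x + y| := by
  rcases abs_cases x with ⟨hx, _⟩ | ⟨hx, _⟩ <;> rcases abs_cases y with ⟨hy, _⟩ | ⟨hy, _⟩ <;>
    rcases abs_cases (x + y) with ⟨hxy, _⟩ | ⟨hxy, _⟩ <;> simp only [hx, hy, hxy] <;> grind

theorem mul_add_mul_le_of_abs_le {a b s : R} (ha : |a| ≤ s) (hb : |b| ≤ s) (x y : R) :
    a * x + b * y ≤ s * (|x| + |y|) :=
  calc a * x + b * y ≤ |a * x| + |b * y| := add_le_add (le_abs_self _) (le_abs_self _)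
    _ = |a| * |x| + |b| * |y| := by rw [abs_mul, abs_mul]
    _ ≤ s * |x| + s * |y| := by gcongr
    _ = s * (|x| + |y|) := by ring

theorem tresca_pairing_le {a b s : R} (h : max (max |b - a| |a|) |b| ≤ s) (x y : R) :
    a * x + b * y ≤ s * max (max |x| |y|) |x + y| := by
  simp only [max_le_iff] at h
  obtain ⟨⟨hba, ha⟩, hb⟩ := h
  have hab : |a - b| ≤ s := abs_sub_comm a b ▸ hba
  have hs : 0 ≤ s := (abs_nonneg a).trans ha
  rw [← min_abs_add_abs_eq_max_abs, mul_min_of_nonneg _ _ hs, mul_min_of_nonneg _ _ hs]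
  refine le_min (mul_add_mul_le_of_abs_le ha hb x y) (le_min ?_ ?_)
  · have := mul_add_mul_le_of_abs_le hb hab (x + y) x
    linarith
  · have := mul_add_mul_le_of_abs_le ha hba (x + y) y
    linarith

theorem abs_sign_le_one (t : R) : |(SignType.sign t : R)| ≤ 1 := by
  rcases SignType.sign t with _ | _ | _ <;> simp

theorem exists_tresca_pairing_eq {s : R} (hs : 0 ≤ s) (x y : R) :
    ∃ σ : R × R, max (max |σ.2 - σ.1| |σ.1|) |σ.2| ≤ s ∧
      s * max (max |x| |y|) |x + y| = σ.1 * x + σ.2 * y := by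
  have abs_vertex_le (t : R) : |s * SignType.sign t| ≤ s := by
    rw [abs_mul, abs_of_nonneg hs]
    exact mul_le_of_le_one_right hs (abs_sign_le_one t)
  rcases max_choice (max |x| |y|) |x + y| with h | h <;> rw [h]
  · rcases max_choice |x| |y| with h' | h' <;> rw [h']
    · refine ⟨(s * SignType.sign x, 0), ?_, ?_⟩
      · simpa [hs] using abs_vertex_le x
      · simp [mul_assoc]
    · refine ⟨(0, s * SignType.sign y), ?_, ?_⟩
      · simpa [hs] using abs_vertex_le y
      · simp [mul_assoc]
  · refine ⟨(s * SignType.sign (x + y), s * SignType.sign (x + y)), ?_, ?_⟩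
    · simpa [hs] using abs_vertex_le (x + y)
    · dsimp only
      rw [← mul_add, mul_assoc, sign_mul_self]

end LinearOrderedRing

/-- Dissipation power density of the plane-stress Tresca criterion in principal
strain rates: the supremum of `σ₁ė₁ + σ₂ė₂` over the Tresca hexagon is attained
and equals `σ₀·max(|ė₁|, |ė₂|, |ė₁ + ė₂|)`. -/
theorem tresca_dissipation_principal (σ0 : ℝ) (hσ0 : 0 < σ0) (e1 e2 : ℝ) :
    IsGreatest
      {r : ℝ | ∃ σ : ℝ × ℝ, max (max |σ.2 - σ.1| |σ.1|) |σ.2| ≤ σ0 ∧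
        r = σ.1 * e1 + σ.2 * e2}
      (σ0 * max (max |e1| |e2|) |e1 + e2|) := by
  refine ⟨exists_tresca_pairing_eq hσ0.le e1 e2, ?_⟩
  rintro r ⟨σ, hσ, rfl⟩
  exact tresca_pairing_le hσ e1 e2
end

section
/- Let σ₀ > 0 and ε_x, ε_y, γ ∈ ℝ. Set A = (ε_x − ε_y)² + γ², ė₁ = ((ε_x + ε_y) − √A)/2 and ė₂ = ((ε_x + ε_y) + √A)/2 (the eigenvalues of the matrix with rows (ε_x, γ/2), (γ/2, ε_y)). Then the supremum of σ₁ė₁ + σ₂ė₂ over the set {(σ₁, σ₂) ∈ ℝ² : max(|σ₂ − σ₁|, |σ₁|, |σ₂|) ≤ σ₀} equals σ₀·max( |(ε_x + ε_y − √A)/2|, |(ε_x + ε_y + √A)/2|, |ε_x + ε_y| ). -/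
/-!
The Tresca hexagon has vertices `±(σ₀, 0)`, `±(0, σ₀)`, `±(σ₀, σ₀)`, where the functional
`σ ↦ σ₁ė₁ + σ₂ė₂` takes the values `±σ₀ė₁`, `±σ₀ė₂`, `±σ₀(ė₁ + ė₂)`. For the matching upper bound,
write the functional as `σ₁ė₁ + σ₂ė₂`, `σ₁(ė₁ + ė₂) + (σ₂ - σ₁)ė₂` or `σ₂(ė₁ + ė₂) + (σ₁ - σ₂)ė₁`,
all with coefficients bounded by `σ₀` in absolute value. Since `ė₁`, `ė₂`, `-(ė₁ + ė₂)` sum to zero,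
the largest of their absolute values is the sum of the other two, so one of these decompositions
gives exactly `σ₀ · max(|ė₁|, |ė₂|, |ė₁ + ė₂|)`. Finally `ė₁ + ė₂ = ε_x + ε_y`.
-/

def trescaHexagon (σ0 : ℝ) : Set (ℝ × ℝ) :=
  {σ | max (max |σ.2 - σ.1| |σ.1|) |σ.2| ≤ σ0}

lemma mem_trescaHexagon {σ0 : ℝ} {σ : ℝ × ℝ} :
    σ ∈ trescaHexagon σ0 ↔ |σ.1| ≤ σ0 ∧ |σ.2| ≤ σ0 ∧ |σ.2 - σ.1| ≤ σ0 := by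
  rw [trescaHexagon, Set.mem_ofPred_eq, max_le_iff, max_le_iff]
  tauto

lemma neg_mem_trescaHexagon {σ0 : ℝ} {σ : ℝ × ℝ} (hσ : σ ∈ trescaHexagon σ0) :
    -σ ∈ trescaHexagon σ0 := by
  rw [mem_trescaHexagon] at hσ ⊢
  simpa only [Prod.fst_neg, Prod.snd_neg, abs_neg, ← neg_sub', abs_neg] using hσ

lemma vertices_mem_trescaHexagon {σ0 : ℝ} (hσ0 : 0 ≤ σ0) :
    (σ0, 0) ∈ trescaHexagon σ0 ∧ (0, σ0) ∈ trescaHexagon σ0 ∧ (σ0, σ0) ∈ trescaHexagon σ0 := by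
  simp only [mem_trescaHexagon, sub_self, sub_zero, zero_sub, abs_neg, abs_zero,
    abs_of_nonneg hσ0, le_refl, hσ0, and_self]

lemma mul_add_mul_le_mul_abs_add_abs {a b c x y : ℝ} (ha : |a| ≤ c) (hb : |b| ≤ c) :
    a * x + b * y ≤ c * (|x| + |y|) := by
  have mul_le {a : ℝ} (ha : |a| ≤ c) (x : ℝ) : a * x ≤ c * |x| :=
    calc a * x ≤ |a| * |x| := abs_mul a x ▸ le_abs_self _
      _ ≤ c * |x| := mul_le_mul_of_nonneg_right ha (abs_nonneg x)
  linarith [mul_le ha x, mul_le hb y]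

lemma abs_add_abs_le_max_abs (x y : ℝ) :
    |x| + |y| ≤ max (max |x| |y|) |x + y| ∨ |x + y| + |y| ≤ max (max |x| |y|) |x + y| ∨
      |x + y| + |x| ≤ max (max |x| |y|) |x + y| := by
  rcases le_total 0 x with hx | hx <;> rcases le_total 0 y with hy | hy <;>
    rcases le_total 0 (x + y) with hxy | hxy <;>
    simp only [abs_of_nonneg, abs_of_nonpos, le_max_iff, *] <;> grind

lemma pairing_le_of_mem_trescaHexagon {σ0 : ℝ} {σ : ℝ × ℝ} (hσ : σ ∈ trescaHexagon σ0)
    (e1 e2 : ℝ) : σ.1 * e1 + σ.2 * e2 ≤ σ0 * max (max |e1| |e2|) |e1 + e2| := by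
  obtain ⟨h1, h2, h21⟩ := mem_trescaHexagon.mp hσ
  have h12 : |σ.1 - σ.2| ≤ σ0 := abs_sub_comm σ.1 σ.2 ▸ h21
  have hσ0 : 0 ≤ σ0 := (abs_nonneg _).trans h1
  rcases abs_add_abs_le_max_abs e1 e2 with h | h | h
  · calc σ.1 * e1 + σ.2 * e2 ≤ σ0 * (|e1| + |e2|) := mul_add_mul_le_mul_abs_add_abs h1 h2
      _ ≤ _ := mul_le_mul_of_nonneg_left h hσ0
  · calc σ.1 * e1 + σ.2 * e2 = σ.1 * (e1 + e2) + (σ.2 - σ.1) * e2 := by ring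
      _ ≤ σ0 * (|e1 + e2| + |e2|) := mul_add_mul_le_mul_abs_add_abs h1 h21
      _ ≤ _ := mul_le_mul_of_nonneg_left h hσ0
  · calc σ.1 * e1 + σ.2 * e2 = σ.2 * (e1 + e2) + (σ.1 - σ.2) * e1 := by ring
      _ ≤ σ0 * (|e1 + e2| + |e1|) := mul_add_mul_le_mul_abs_add_abs h2 h12
      _ ≤ _ := mul_le_mul_of_nonneg_left h hσ0

lemma isGreatest_pairing_trescaHexagon {σ0 : ℝ} (hσ0 : 0 ≤ σ0) (e1 e2 : ℝ) :
    IsGreatest {r | ∃ σ ∈ trescaHexagon σ0, r = σ.1 * e1 + σ.2 * e2}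
      (σ0 * max (max |e1| |e2|) |e1 + e2|) := by
  set S := {r | ∃ σ ∈ trescaHexagon σ0, r = σ.1 * e1 + σ.2 * e2}
  have neg_mem {r : ℝ} : r ∈ S → -r ∈ S := by
    rintro ⟨σ, hσ, rfl⟩
    exact ⟨-σ, neg_mem_trescaHexagon hσ, by simp only [Prod.fst_neg, Prod.snd_neg]; ring⟩
  have abs_mem {x : ℝ} (hx : σ0 * x ∈ S) : σ0 * |x| ∈ S :=
    abs_by_cases (fun t => σ0 * t ∈ S) hx (by simpa only [mul_neg] using neg_mem hx)
  obtain ⟨hv1, hv2, hv12⟩ := vertices_mem_trescaHexagon hσ0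
  have he1 : σ0 * |e1| ∈ S := abs_mem ⟨_, hv1, by ring⟩
  have he2 : σ0 * |e2| ∈ S := abs_mem ⟨_, hv2, by ring⟩
  have he12 : σ0 * |e1 + e2| ∈ S := abs_mem ⟨_, hv12, by ring⟩
  refine ⟨?_, fun r ⟨σ, hσ, hr⟩ => hr ▸ pairing_le_of_mem_trescaHexagon hσ e1 e2⟩
  rcases max_choice (max |e1| |e2|) |e1 + e2| with h | h <;> rw [h]
  · rcases max_choice |e1| |e2| with h' | h' <;> rw [h'] <;> assumption
  · exact he12

theorem tresca_dissipation_cartesian_general (σ0 : ℝ) (hσ0 : 0 < σ0)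
    (εx εy A e1 e2 : ℝ)
    (he1 : e1 = ((εx + εy) - Real.sqrt A) / 2)
    (he2 : e2 = ((εx + εy) + Real.sqrt A) / 2) :
    IsLUB
      {r : ℝ | ∃ σ : ℝ × ℝ, max (max |σ.2 - σ.1| |σ.1|) |σ.2| ≤ σ0 ∧
        r = σ.1 * e1 + σ.2 * e2}
      (σ0 * max (max |(εx + εy - Real.sqrt A) / 2| |(εx + εy + Real.sqrt A) / 2|)
        |εx + εy|) := by
  have hsum : εx + εy = e1 + e2 := by rw [he1, he2]; ring
  rw [← he1, ← he2, hsum]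
  exact (isGreatest_pairing_trescaHexagon hσ0.le e1 e2).isLUB

/-- Cartesian form of the plane-stress Tresca dissipation power density:
with principal strain rates `ė₁, ė₂` obtained from `ε_x, ε_y, γ`, the
supremum of `σ₁ė₁ + σ₂ė₂` over the Tresca hexagon equals
`σ₀·max(|(ε_x+ε_y−√A)/2|, |(ε_x+ε_y+√A)/2|, |ε_x+ε_y|)`. -/
theorem tresca_dissipation_cartesian (σ0 : ℝ) (hσ0 : 0 < σ0)
    (εx εy γ A e1 e2 : ℝ)
    (hA : A = (εx - εy) ^ 2 + γ ^ 2)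
    (he1 : e1 = ((εx + εy) - Real.sqrt A) / 2)
    (he2 : e2 = ((εx + εy) + Real.sqrt A) / 2) :
    IsLUB
      {r : ℝ | ∃ σ : ℝ × ℝ, max (max |σ.2 - σ.1| |σ.1|) |σ.2| ≤ σ0 ∧
        r = σ.1 * e1 + σ.2 * e2}
      (σ0 * max (max |(εx + εy - Real.sqrt A) / 2| |(εx + εy + Real.sqrt A) / 2|)
        |εx + εy|) :=
  tresca_dissipation_cartesian_general σ0 hσ0 εx εy A e1 e2 he1 he2
end

section
/- Let f_tx, f_cx, f_ty, f_cy, f_vxy > 0 and define χ = 1 + (f_tx − f_cx)²/(4 f_tx f_cx) + (f_ty − f_cy)²/(2 f_ty f_cy). For (σ_x, σ_y, σ_z, τ) ∈ ℝ⁴ define f(σ_x, σ_y, σ_z, τ) = σ_x(1/f_tx − 1/f_cx) + (σ_y + σ_z)(1/f_ty − 1/f_cy) + σ_x²/(f_tx f_cx) + (σ_y² + σ_z²)/(f_ty f_cy) + τ²/f_vxy². Then for all (ε_x, ε_y, γ) ∈ ℝ³, the supremum of σ_x ε_x + σ_y ε_y + τ γ over the set {(σ_x, σ_y, σ_z, τ)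 ∈ ℝ⁴ : f(σ_x, σ_y, σ_z, τ) ≤ 1} is attained and equals ((f_tx − f_cx)/2)·ε_x + ((f_ty − f_cy)/2)·ε_y + √( χ·( f_tx f_cx ε_x² + f_ty f_cy ε_y² + f_vxy² γ² ) ). -/
/-!
Completing the squares, `{f ≤ 1}` is the ellipsoid `∑ (σᵢ - cᵢ)² / wᵢ ≤ χ` with centre
`c = ((f_tx - f_cx)/2, (f_ty - f_cy)/2, (f_ty - f_cy)/2, 0)` and weights
`w = (f_tx f_cx, f_ty f_cy, f_ty f_cy, f_vxy²)`. The support function of this ellipsoid in the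
direction `e = (ε_x, ε_y, 0, γ)` is `⟨c, e⟩ + √(χ ∑ wᵢ eᵢ²)`: the upper bound is the weighted
Cauchy–Schwarz inequality, and equality holds for `σ - c` proportional to `(wᵢ eᵢ)ᵢ`.
-/

open Finset

theorem Finset.sq_sum_mul_le_sum_sq_div_mul_sum_mul_sq {ι R : Type*} [Field R] [LinearOrder R]
    [IsStrictOrderedRing R] (s : Finset ι) (x e : ι → R) {w : ι → R} (hw : ∀ i ∈ s, 0 < w i) :
    (∑ i ∈ s, x i * e i) ^ 2 ≤ (∑ i ∈ s, x i ^ 2 / w i) * ∑ i ∈ s, w i * e i ^ 2 :=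
  sum_sq_le_sum_mul_sum_of_sq_le_mul s (fun i hi ↦ div_nonneg (sq_nonneg _) (hw i hi).le)
    (fun i hi ↦ mul_nonneg (hw i hi).le (sq_nonneg _))
    fun i hi ↦ le_of_eq (by field_simp [(hw i hi).ne'])

section Ellipsoid

variable {ι : Type*} [Fintype ι] {w : ι → ℝ} {r : ℝ}

theorem isGreatest_sum_mul_of_sum_sq_div_le (e : ι → ℝ) (hw : ∀ i, 0 < w i) (hr : 0 ≤ r) :
    IsGreatest {t | ∃ x : ι → ℝ, ∑ i, x i ^ 2 / w i ≤ r ∧ t = ∑ i, x i * e i}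
      (√(r * ∑ i, w i * e i ^ 2)) := by
  set S := ∑ i, w i * e i ^ 2
  have hS : 0 ≤ S := sum_nonneg fun i _ ↦ mul_nonneg (hw i).le (sq_nonneg _)
  refine ⟨?_, ?_⟩
  · rcases hS.eq_or_lt with hS0 | hSpos
    · exact ⟨0, by simpa using hr, by simp [← hS0]⟩
    set k := √(r / S)
    have hk : k ^ 2 * S = r := by
      rw [Real.sq_sqrt (div_nonneg hr hS), div_mul_cancel₀ _ hSpos.ne']
    refine ⟨fun i ↦ k * (w i * e i), le_of_eq ?_, ?_⟩
    · rw [← hk, mul_sum]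
      exact sum_congr rfl fun i _ ↦ by field_simp [(hw i).ne']
    · rw [← hk, show k ^ 2 * S * S = (k * S) ^ 2 by ring, Real.sqrt_sq (by positivity), mul_sum]
      exact sum_congr rfl fun i _ ↦ by ring
  · rintro t ⟨x, hx, rfl⟩
    refine Real.le_sqrt_of_sq_le ?_
    calc (∑ i, x i * e i) ^ 2 ≤ (∑ i, x i ^ 2 / w i) * S :=
          sq_sum_mul_le_sum_sq_div_mul_sum_mul_sq _ _ _ fun i _ ↦ hw i
      _ ≤ r * S := mul_le_mul_of_nonneg_right hx hS

theorem isGreatest_sum_mul_of_sum_sq_sub_div_le (c e : ι → ℝ) (hw : ∀ i, 0 < w i)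
    (hr : 0 ≤ r) :
    IsGreatest {t | ∃ x : ι → ℝ, ∑ i, (x i - c i) ^ 2 / w i ≤ r ∧ t = ∑ i, x i * e i}
      (∑ i, c i * e i + √(r * ∑ i, w i * e i ^ 2)) := by
  obtain ⟨⟨y, hy, hmax⟩, hub⟩ := isGreatest_sum_mul_of_sum_sq_div_le e hw hr
  refine ⟨⟨c + y, by simpa using hy, ?_⟩, ?_⟩
  · simp [hmax, add_mul, sum_add_distrib]
  · rintro t ⟨x, hx, rfl⟩
    have hbound := hub ⟨x - c, hx, rfl⟩
    simp only [Pi.sub_apply, sub_mul, sum_sub_distrib] at hbound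
    linarith

end Ellipsoid

/-- Dissipation power density of the plane-strain Tsai-Wu failure criterion:
the supremum of `σ_x ε_x + σ_y ε_y + τ γ` over `{f ≤ 1}` is attained and has
the stated closed form. -/
theorem tsaiWu_dissipation
    (ftx fcx fty fcy fvxy : ℝ)
    (hftx : 0 < ftx) (hfcx : 0 < fcx) (hfty : 0 < fty) (hfcy : 0 < fcy)
    (hfvxy : 0 < fvxy)
    (χ : ℝ)
    (hχ : χ = 1 + (ftx - fcx) ^ 2 / (4 * ftx * fcx)
            + (fty - fcy) ^ 2 / (2 * fty * fcy))
    (f : ℝ → ℝ → ℝ → ℝ → ℝ)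
    (hf : ∀ σx σy σz τ, f σx σy σz τ
        = σx * (1 / ftx - 1 / fcx) + (σy + σz) * (1 / fty - 1 / fcy)
          + σx ^ 2 / (ftx * fcx) + (σy ^ 2 + σz ^ 2) / (fty * fcy)
          + τ ^ 2 / fvxy ^ 2)
    (εx εy γ : ℝ) :
    IsGreatest
      {r : ℝ | ∃ σx σy σz τ : ℝ, f σx σy σz τ ≤ 1 ∧
        r = σx * εx + σy * εy + τ * γ}
      ((ftx - fcx) / 2 * εx + (fty - fcy) / 2 * εy
        + Real.sqrt (χ * (ftx * fcx * εx ^ 2 + fty * fcy * εy ^ 2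
            + fvxy ^ 2 * γ ^ 2))) := by
  set c : Fin 4 → ℝ := ![(ftx - fcx) / 2, (fty - fcy) / 2, (fty - fcy) / 2, 0]
  set w : Fin 4 → ℝ := ![ftx * fcx, fty * fcy, fty * fcy, fvxy ^ 2]
  have hw : ∀ i, 0 < w i := by
    intro i; fin_cases i <;> simp [w] <;> positivity
  have hχ0 : 0 ≤ χ := by rw [hχ]; positivity
  have hf_le_one_iff : ∀ σx σy σz τ, f σx σy σz τ ≤ 1 ↔
      ∑ i, (![σx, σy, σz, τ] i - c i) ^ 2 / w i ≤ χ := by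
    intro σx σy σz τ
    have hsquares : ∑ i, (![σx, σy, σz, τ] i - c i) ^ 2 / w i = f σx σy σz τ - 1 + χ := by
      simp only [Fin.sum_univ_four, Matrix.cons_val_zero, Matrix.cons_val_one, Matrix.cons_val,
        sub_zero, hf, hχ, c, w]
      field_simp
      ring
    rw [hsquares]
    constructor <;> intro h <;> linarith
  convert isGreatest_sum_mul_of_sum_sq_sub_div_le c ![εx, εy, 0, γ] hw hχ0 using 1
  · ext t
    constructor
    · rintro ⟨σx, σy, σz, τ, h, rfl⟩
      exact ⟨![σx, σy, σz, τ], (hf_le_one_iff _ _ _ _).1 h, by simp [Fin.sum_univ_four]⟩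
    · rintro ⟨x, h, rfl⟩
      refine ⟨x 0, x 1, x 2, x 3, (hf_le_one_iff _ _ _ _).2 ?_, by simp [Fin.sum_univ_four]⟩
      convert h using 4 with i
      fin_cases i <;> rfl
  · simp [Fin.sum_univ_four, c, w]
end

section
/- Let P be the 3×3 real matrix with rows (1, −1/2, 0), (−1/2, 1, 0), (0, 0, 3), let R be the 3×3 real matrix with rows (√3/2, 0, 0), (−1/2, 1, 0), (0, 0, √3), and write R^{-T} = (Rᵀ)⁻¹. Let n_p, m_p > 0 and fix i ∈ {1, 2}; set α = (−1)^i/(2√3) and, for m, n ∈ ℝ³, f_i(m, n) = nᵀPn/n_p² + mᵀPm/m_p² + ((−1)^i/√3)·mᵀPn/(n_p m_p). Let T be the 6×6 block matrix with blocks T₁₁ = 0, T₁₂ = n_p·R^{-T}, T₂₁ = (m_p/√(1 − α²))·R^{-T}, T₂₂ = −(α n_p/√(1 − α²))·R^{-T}. Then for all (κ, ε) ∈ ℝ³ × ℝ³, the supremum of mᵀκ + nᵀε over the set {(m, n) ∈ ℝ³ × ℝ³ : f_i(m, n) ≤ 1} is attained and equals ‖T·(κ, ε)‖, the Euclidean norm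 in ℝ⁶ of T applied to the vector (κ, ε). -/
/-!
With `c = √(1 - α²)` and `P = Rᵀ R`, completing the square writes `f_i(m, n) = ‖R̃ᵢ x‖²` for
`x = (m, n)` and the block matrix `R̃ᵢ = [[(α/m_p) R, R/n_p], [(c/m_p) R, 0]]`, whose inverse
transpose is the matrix `T` of the statement. Substituting `u = R̃ᵢ x` turns `mᵀκ + nᵀε` into
`⟪u, T (κ, ε)⟫` over the unit ball, whose maximum `‖T (κ, ε)‖` is given by Cauchy–Schwarz.
-/

open Matrix

theorem isGreatest_inner_closedBall {E : Type*} [NormedAddCommGroup E] [InnerProductSpace ℝ E]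
    (z : E) : IsGreatest ((fun x => inner ℝ x z) '' Metric.closedBall 0 1) ‖z‖ := by
  refine ⟨?_, ?_⟩
  · rcases eq_or_ne z 0 with rfl | hz
    · exact ⟨0, by simp, by simp⟩
    · refine ⟨‖z‖⁻¹ • z, by simp [norm_smul, hz], ?_⟩
      simp only [real_inner_smul_left, real_inner_self_eq_norm_sq]
      field_simp
  · rintro _ ⟨x, hx, rfl⟩
    rw [mem_closedBall_zero_iff] at hx
    calc inner ℝ x z ≤ ‖x‖ * ‖z‖ := real_inner_le_norm x z
      _ ≤ 1 * ‖z‖ := by gcongr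
      _ = ‖z‖ := one_mul _

variable {ι : Type*} [Fintype ι]

theorem Matrix.isGreatest_dotProduct_ellipsoid [DecidableEq ι] (A T : Matrix ι ι ℝ)
    (hAT : Aᵀ * T = 1) (y : ι → ℝ) :
    IsGreatest {r : ℝ | ∃ x : ι → ℝ, A *ᵥ x ⬝ᵥ A *ᵥ x ≤ 1 ∧ r = x ⬝ᵥ y}
      ‖(WithLp.equiv 2 (ι → ℝ)).symm (T *ᵥ y)‖ := by
  have hATt : A * Tᵀ = 1 := by
    simpa [transpose_mul] using congrArg transpose (mul_eq_one_comm.mp hAT)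
  have hdot : ∀ x, x ⬝ᵥ y = inner ℝ (WithLp.toLp 2 (A *ᵥ x)) (WithLp.toLp 2 (T *ᵥ y)) := by
    intro x
    rw [EuclideanSpace.inner_toLp_toLp, star_trivial, dotProduct_mulVec, ← mulVec_transpose,
      mulVec_mulVec, hAT, one_mulVec, dotProduct_comm]
  have hball : ∀ x, A *ᵥ x ⬝ᵥ A *ᵥ x ≤ 1 ↔ WithLp.toLp 2 (A *ᵥ x) ∈ Metric.closedBall 0 1 := by
    intro x
    rw [mem_closedBall_zero_iff, ← sq_le_one_iff₀ (norm_nonneg _), ← real_inner_self_eq_norm_sq,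
      EuclideanSpace.inner_toLp_toLp, star_trivial]
  obtain ⟨⟨u, hu, hmax⟩, hbound⟩ := isGreatest_inner_closedBall (WithLp.toLp 2 (T *ᵥ y))
  refine ⟨⟨Tᵀ *ᵥ u.ofLp, ?_⟩, ?_⟩
  · have hAu : A *ᵥ (Tᵀ *ᵥ u.ofLp) = u.ofLp := by rw [mulVec_mulVec, hATt, one_mulVec]
    rw [hball, hdot, hAu]
    exact ⟨hu, hmax.symm⟩
  · rintro _ ⟨x, hx, rfl⟩
    rw [hdot]
    exact hbound ⟨_, (hball x).mp hx, rfl⟩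

/-- The paper's `R̃ᵢ` for `c = √(1 - α²)`: completing the square gives
`f_i(m, n) = ‖R̃ᵢ (m, n)‖²` when `P = Rᵀ R`. -/
noncomputable def ilyushinFactor (R : Matrix ι ι ℝ) (α c np mp : ℝ) : Matrix (ι ⊕ ι) (ι ⊕ ι) ℝ :=
  fromBlocks ((α / mp) • R) ((1 / np) • R) ((c / mp) • R) 0

theorem ilyushinFactor_transpose_mul [DecidableEq ι] {R : Matrix ι ι ℝ} (hR : IsUnit R.det)
    {α c np mp : ℝ} (hc : c ≠ 0) (hnp : np ≠ 0) (hmp : mp ≠ 0) :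
    (ilyushinFactor R α c np mp)ᵀ * fromBlocks 0 (np • (Rᵀ)⁻¹) ((mp / c) • (Rᵀ)⁻¹)
      (-((α * np / c) • (Rᵀ)⁻¹)) = 1 := by
  have hRR : Rᵀ * (Rᵀ)⁻¹ = 1 := mul_nonsing_inv _ (by rwa [det_transpose])
  have h₁ : mp / c * (c / mp) = 1 := by field_simp
  have h₀ : np * (α / mp) - α * np / c * (c / mp) = 0 := by field_simp; ring
  have h₂ : np * (1 / np) = 1 := by field_simp
  rw [ilyushinFactor, fromBlocks_transpose, fromBlocks_multiply, ← fromBlocks_one]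
  simp only [transpose_smul, transpose_zero, Matrix.smul_mul, Matrix.mul_smul, mul_neg, hRR,
    smul_smul, Matrix.mul_zero, Matrix.zero_mul, smul_zero, zero_add, sub_zero, ← sub_eq_add_neg,
    ← sub_smul, h₀, h₁, h₂, one_smul, zero_smul]

theorem ilyushinFactor_mulVec_dotProduct_self (R : Matrix ι ι ℝ) {α c : ℝ} (np mp : ℝ)
    (hc : c ^ 2 = 1 - α ^ 2) (m n : ι → ℝ) :
    ilyushinFactor R α c np mp *ᵥ Sum.elim m n ⬝ᵥ ilyushinFactor R α c np mp *ᵥ Sum.elim m n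
      = R *ᵥ n ⬝ᵥ R *ᵥ n / np ^ 2 + R *ᵥ m ⬝ᵥ R *ᵥ m / mp ^ 2
        + 2 * α * (R *ᵥ m ⬝ᵥ R *ᵥ n) / (np * mp) := by
  simp only [ilyushinFactor, fromBlocks_mulVec, Sum.elim_comp_inl, Sum.elim_comp_inr,
    smul_mulVec, zero_mulVec, add_zero, sumElim_dotProduct_sumElim, add_dotProduct,
    dotProduct_add, smul_dotProduct, dotProduct_smul, smul_eq_mul, dotProduct_comm (R *ᵥ n)]
  linear_combination (R *ᵥ m ⬝ᵥ R *ᵥ m) / mp ^ 2 * hc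

theorem Matrix.dotProduct_transpose_mul_self_mulVec {m : Type*} [Fintype m] (R : Matrix m ι ℝ)
    (x y : ι → ℝ) : x ⬝ᵥ (Rᵀ * R) *ᵥ y = R *ᵥ x ⬝ᵥ R *ᵥ y := by
  rw [← mulVec_mulVec, dotProduct_mulVec, vecMul_transpose]

theorem setOf_exists_sumElim_dotProduct {κ : Type*} [Fintype κ] (Q : (ι ⊕ κ → ℝ) → Prop)
    (a : ι → ℝ) (b : κ → ℝ) :
    {r : ℝ | ∃ m n, Q (Sum.elim m n) ∧ r = m ⬝ᵥ a + n ⬝ᵥ b}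
      = {r : ℝ | ∃ x, Q x ∧ r = x ⬝ᵥ Sum.elim a b} := by
  ext r
  constructor
  · rintro ⟨m, n, hQ, rfl⟩
    exact ⟨Sum.elim m n, hQ, (sumElim_dotProduct_sumElim _ _ _ _).symm⟩
  · rintro ⟨x, hQ, rfl⟩
    refine ⟨x ∘ Sum.inl, x ∘ Sum.inr, ?_, ?_⟩
    · rwa [Sum.elim_comp_inl_inr]
    · rw [← sumElim_dotProduct_sumElim, Sum.elim_comp_inl_inr]

theorem ilyushinR_transpose_mul_self :
    (!![Real.sqrt 3 / 2, 0, 0; -1/2, 1, 0; 0, 0, Real.sqrt 3])ᵀ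
        * !![Real.sqrt 3 / 2, 0, 0; -1/2, 1, 0; 0, 0, Real.sqrt 3]
      = !![1, -1/2, 0; -1/2, 1, 0; 0, 0, 3] := by
  have h3 : Real.sqrt 3 * Real.sqrt 3 = 3 := Real.mul_self_sqrt (by norm_num)
  ext i j
  fin_cases i <;> fin_cases j <;> simp [mul_apply, Fin.sum_univ_three]
  linear_combination h3 / 4

theorem ilyushin_branch_dissipation_general
    (P R : Matrix (Fin 3) (Fin 3) ℝ)
    (hP : P = !![1, -1/2, 0; -1/2, 1, 0; 0, 0, 3])
    (hR : R = !![Real.sqrt 3 / 2, 0, 0; -1/2, 1, 0; 0, 0, Real.sqrt 3])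
    (np mp : ℝ) (hnp : 0 < np) (hmp : 0 < mp)
    (i : ℕ)
    (α : ℝ) (hα : α = (-1 : ℝ) ^ i / (2 * Real.sqrt 3))
    (f : (Fin 3 → ℝ) → (Fin 3 → ℝ) → ℝ)
    (hf : ∀ m n, f m n
        = n ⬝ᵥ P.mulVec n / np ^ 2 + m ⬝ᵥ P.mulVec m / mp ^ 2
          + ((-1 : ℝ) ^ i / Real.sqrt 3) * (m ⬝ᵥ P.mulVec n) / (np * mp))
    (T : Matrix (Fin 3 ⊕ Fin 3) (Fin 3 ⊕ Fin 3) ℝ)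
    (hT : T = Matrix.fromBlocks
        (0 : Matrix (Fin 3) (Fin 3) ℝ) (np • (Rᵀ)⁻¹)
        ((mp / Real.sqrt (1 - α ^ 2)) • (Rᵀ)⁻¹)
        (-((α * np / Real.sqrt (1 - α ^ 2)) • (Rᵀ)⁻¹)))
    (κ ε : Fin 3 → ℝ) :
    IsGreatest
      {r : ℝ | ∃ m n : Fin 3 → ℝ, f m n ≤ 1 ∧ r = m ⬝ᵥ κ + n ⬝ᵥ ε}
      ‖(WithLp.equiv 2 ((Fin 3 ⊕ Fin 3) → ℝ)).symm
          (T.mulVec (Sum.elim κ ε))‖ := by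
  have hα2 : α ^ 2 = 1 / 12 := by
    rw [hα, div_pow, mul_pow, Real.sq_sqrt (by norm_num), ← pow_mul, mul_comm, pow_mul]
    norm_num
  have hsign : (-1 : ℝ) ^ i / Real.sqrt 3 = 2 * α := by
    rw [hα]; field_simp
  set c := Real.sqrt (1 - α ^ 2) with hc
  have hc0 : c ≠ 0 := by rw [hc, hα2]; positivity
  have hc2 : c ^ 2 = 1 - α ^ 2 := Real.sq_sqrt (by rw [hα2]; norm_num)
  set A := ilyushinFactor R α c np mp
  have hfA : ∀ m n, f m n = A *ᵥ Sum.elim m n ⬝ᵥ A *ᵥ Sum.elim m n := by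
    intro m n
    rw [hf, hsign, hP, ← ilyushinR_transpose_mul_self, ← hR,
      ilyushinFactor_mulVec_dotProduct_self R np mp hc2]
    simp only [dotProduct_transpose_mul_self_mulVec]
  have hAT : Aᵀ * T = 1 := by
    rw [hT]
    exact ilyushinFactor_transpose_mul (by simp [hR, det_fin_three]) hc0 hnp.ne' hmp.ne'
  simp only [hfA]
  convert isGreatest_dotProduct_ellipsoid A T hAT (Sum.elim κ ε) using 1
  exact setOf_exists_sumElim_dotProduct (fun x => A *ᵥ x ⬝ᵥ A *ᵥ x ≤ 1) κ ε

/-- Single-branch dissipation power area-density of the approximate Ilyushin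
criterion: the supremum of `mᵀκ + nᵀε` over `{f_i ≤ 1}` is attained and equals
`‖T·(κ, ε)‖` with `T = R̃ᵢ^{-T}` the stated 6×6 block matrix. -/
theorem ilyushin_branch_dissipation
    (P R : Matrix (Fin 3) (Fin 3) ℝ)
    (hP : P = !![1, -1/2, 0; -1/2, 1, 0; 0, 0, 3])
    (hR : R = !![Real.sqrt 3 / 2, 0, 0; -1/2, 1, 0; 0, 0, Real.sqrt 3])
    (np mp : ℝ) (hnp : 0 < np) (hmp : 0 < mp)
    (i : ℕ) (hi : i = 1 ∨ i = 2)
    (α : ℝ) (hα : α = (-1 : ℝ) ^ i / (2 * Real.sqrt 3))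
    (f : (Fin 3 → ℝ) → (Fin 3 → ℝ) → ℝ)
    (hf : ∀ m n, f m n
        = n ⬝ᵥ P.mulVec n / np ^ 2 + m ⬝ᵥ P.mulVec m / mp ^ 2
          + ((-1 : ℝ) ^ i / Real.sqrt 3) * (m ⬝ᵥ P.mulVec n) / (np * mp))
    (T : Matrix (Fin 3 ⊕ Fin 3) (Fin 3 ⊕ Fin 3) ℝ)
    (hT : T = Matrix.fromBlocks
        (0 : Matrix (Fin 3) (Fin 3) ℝ) (np • (Rᵀ)⁻¹)
        ((mp / Real.sqrt (1 - α ^ 2)) • (Rᵀ)⁻¹)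
        (-((α * np / Real.sqrt (1 - α ^ 2)) • (Rᵀ)⁻¹)))
    (κ ε : Fin 3 → ℝ) :
    IsGreatest
      {r : ℝ | ∃ m n : Fin 3 → ℝ, f m n ≤ 1 ∧ r = m ⬝ᵥ κ + n ⬝ᵥ ε}
      ‖(WithLp.equiv 2 ((Fin 3 ⊕ Fin 3) → ℝ)).symm
          (T.mulVec (Sum.elim κ ε))‖ :=
  ilyushin_branch_dissipation_general P R hP hR np mp hnp hmp i α hα f hf T hT κ ε
end
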